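/- arXiv:2204.13693 — 3 statements merged into one kernel-verified Lean document; each statement's English description precedes it below -/
import Mathlib

section
/- If every branch of the complete tableau tree for φ has at most k+1 poised nodes and all branches are rejected by the Contradiction rule, and the set of child labels produced by each expansion rule logically covers the parent (Γ(u) is satisfiable at a point iff Γ(u₁) or Γ(u₂) is), then φ is unsatisfiable on finite traces. (Soundness direction restated contrapositively: if φ is satisfiable, some branch of the complete tableau is accepted.) -/
/-- LTLf formulas in negated normal form over atomic propositions `α`. -/
inductive LTLf (α : Type) : Type
  | atom : α → LTLf α
  | natom : α → LTLf α
  | and : LTLf α → LTLf α → LTLf α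
  | or : LTLf α → LTLf α → LTLf α
  | next : LTLf α → LTLf α
  | wnext : LTLf α → LTLf α
  | until_ : LTLf α → LTLf α → LTLf α
  | release : LTLf α → LTLf α → LTLf α

/-- Finite-trace satisfaction: a trace is a finite list of states (valuations). -/
def Sat {α : Type} (σ : List (α → Prop)) : LTLf α → ℕ → Prop
  | .atom a, i => (σ.getD i (fun _ => False)) a
  | .natom a, i => ¬ (σ.getD i (fun _ => False)) a
  | .and φ ψ, i => Sat σ φ i ∧ Sat σ ψ i
  | .or φ ψ, i => Sat σ φ i ∨ Sat σ ψ i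
  | .next φ, i => i < σ.length - 1 ∧ Sat σ φ (i + 1)
  | .wnext φ, i => i = σ.length - 1 ∨ Sat σ φ (i + 1)
  | .until_ φ ψ, i => ∃ j, i ≤ j ∧ j < σ.length ∧ Sat σ ψ j ∧ ∀ k, i ≤ k → k < j → Sat σ φ k
  | .release φ ψ, i => (∀ j, i ≤ j → j < σ.length → Sat σ ψ j) ∨
      ∃ k, i ≤ k ∧ k < σ.length ∧ Sat σ φ k ∧ ∀ j, i ≤ j → j ≤ k → Sat σ ψ j

/-- Elementary formulas: literals, tomorrow and weak tomorrow formulas. -/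
def Elementary {α : Type} : LTLf α → Prop
  | .atom _ => True
  | .natom _ => True
  | .next _ => True
  | .wnext _ => True
  | _ => False

/-- A label is poised when all its formulas are elementary. -/
def Poised {α : Type} (Γ : Set (LTLf α)) : Prop := ∀ ψ ∈ Γ, Elementary ψ

/-- The tableau expansion rules: each rule consumes a formula and produces
the label of one of the (at most two) children. -/
inductive Expands {α : Type} (Γ : Set (LTLf α)) : Set (LTLf α) → Prop
  | orl {a b : LTLf α} : LTLf.or a b ∈ Γ → Expands Γ ((Γ \ {LTLf.or a b}) ∪ {a})
  | orr {a b : LTLf α} : LTLf.or a b ∈ Γ → Expands Γ ((Γ \ {LTLf.or a b}) ∪ {b})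
  | and_ {a b : LTLf α} : LTLf.and a b ∈ Γ → Expands Γ ((Γ \ {LTLf.and a b}) ∪ {a, b})
  | untl {a b : LTLf α} : LTLf.until_ a b ∈ Γ → Expands Γ ((Γ \ {LTLf.until_ a b}) ∪ {b})
  | untr {a b : LTLf α} : LTLf.until_ a b ∈ Γ →
      Expands Γ ((Γ \ {LTLf.until_ a b}) ∪ {a, LTLf.next (.until_ a b)})
  | rell {a b : LTLf α} : LTLf.release a b ∈ Γ → Expands Γ ((Γ \ {LTLf.release a b}) ∪ {a, b})
  | relr {a b : LTLf α} : LTLf.release a b ∈ Γ →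
      Expands Γ ((Γ \ {LTLf.release a b}) ∪ {b, LTLf.wnext (.release a b)})

/-- The label produced by the Step rule from a poised label. -/
def stepLabel {α : Type} (Γ : Set (LTLf α)) : Set (LTLf α) :=
  {ψ | LTLf.next ψ ∈ Γ ∨ LTLf.wnext ψ ∈ Γ}

/-- Successor relation between consecutive labels in a tableau branch. -/
def TabRel {α : Type} (Γ Γ' : Set (LTLf α)) : Prop :=
  Expands Γ Γ' ∨ (Poised Γ ∧ Γ' = stepLabel Γ)

/-- Propositional consistency of (the literals of) a label: the propositional analogue of
the Contradiction-rule check. -/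
def Consistent {α : Type} (Γ : Set (LTLf α)) : Prop :=
  ∃ v : α → Prop, (∀ a, LTLf.atom a ∈ Γ → v a) ∧ (∀ a, LTLf.natom a ∈ Γ → ¬ v a)

/-- A branch of the tableau for `φ`: a nonempty sequence of labels starting at `{φ}`,
consecutive labels related by an expansion rule or by the Step rule. -/
def IsBranch {α : Type} (φ : LTLf α) (br : List (Set (LTLf α))) : Prop :=
  br ≠ [] ∧ br.getD 0 ∅ = {φ} ∧
    ∀ i, i + 1 < br.length → TabRel (br.getD i ∅) (br.getD (i + 1) ∅)

/-- An accepted branch: it ends in a poised node with no tomorrow formulas (Empty rule),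
and no poised node along it is rejected by the Contradiction rule. -/
def Accepted {α : Type} (φ : LTLf α) (br : List (Set (LTLf α))) : Prop :=
  IsBranch φ br ∧
  Poised (br.getD (br.length - 1) ∅) ∧
  (∀ ψ, LTLf.next ψ ∉ br.getD (br.length - 1) ∅) ∧
  (∀ i < br.length, Poised (br.getD i ∅) → Consistent (br.getD i ∅))

namespace Stmt12Aux
variable {α : Type}

/-- Weight of a formula: number of expansion steps it can trigger. -/
def w : LTLf α → ℕ
  | .atom _ => 0
  | .natom _ => 0
  | .next _ => 0
  | .wnext _ => 0
  | .and a b => w a + w b + 1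
  | .or a b => w a + w b + 1
  | .until_ a b => w a + w b + 1
  | .release a b => w a + w b + 1

lemma sum_insert_le' [DecidableEq (LTLf α)] {s : Finset (LTLf α)} {a : LTLf α} :
    ∑ ψ ∈ insert a s, w ψ ≤ w a + ∑ ψ ∈ s, w ψ := by
  by_cases h : a ∈ s
  · rw [Finset.insert_eq_self.mpr h]; exact Nat.le_add_left _ _
  · rw [Finset.sum_insert h]

lemma sum_insert_erase_lt [DecidableEq (LTLf α)] {Γf : Finset (LTLf α)} {f a : LTLf α}
    (hf : f ∈ Γf) (h : w a < w f) :
    ∑ ψ ∈ insert a (Γf.erase f), w ψ < ∑ ψ ∈ Γf, w ψ := by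
  have h1 : ∑ ψ ∈ insert a (Γf.erase f), w ψ ≤ w a + ∑ ψ ∈ Γf.erase f, w ψ := sum_insert_le'
  have h2 : w f + ∑ ψ ∈ Γf.erase f, w ψ = ∑ ψ ∈ Γf, w ψ := Finset.add_sum_erase _ _ hf
  omega

lemma sum_insert2_erase_lt [DecidableEq (LTLf α)] {Γf : Finset (LTLf α)} {f a b : LTLf α}
    (hf : f ∈ Γf) (h : w a + w b < w f) :
    ∑ ψ ∈ insert a (insert b (Γf.erase f)), w ψ < ∑ ψ ∈ Γf, w ψ := by
  have h1 : ∑ ψ ∈ insert a (insert b (Γf.erase f)), w ψ ≤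
      w a + ∑ ψ ∈ insert b (Γf.erase f), w ψ := sum_insert_le'
  have h1' : ∑ ψ ∈ insert b (Γf.erase f), w ψ ≤ w b + ∑ ψ ∈ Γf.erase f, w ψ := sum_insert_le'
  have h2 : w f + ∑ ψ ∈ Γf.erase f, w ψ = ∑ ψ ∈ Γf, w ψ := Finset.add_sum_erase _ _ hf
  omega

lemma coe_insert_erase [DecidableEq (LTLf α)] {Γf : Finset (LTLf α)} {f a : LTLf α} :
    (↑(insert a (Γf.erase f)) : Set (LTLf α)) = ((↑Γf : Set (LTLf α)) \ {f}) ∪ {a} := by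
  ext x
  simp only [Finset.coe_insert, Finset.coe_erase, Set.mem_insert_iff, Set.mem_diff,
    Set.mem_singleton_iff, Set.mem_union, Finset.mem_coe]
  tauto

lemma coe_insert2_erase [DecidableEq (LTLf α)] {Γf : Finset (LTLf α)} {f a b : LTLf α} :
    (↑(insert a (insert b (Γf.erase f))) : Set (LTLf α)) =
      ((↑Γf : Set (LTLf α)) \ {f}) ∪ {a, b} := by
  ext x
  simp only [Finset.coe_insert, Finset.coe_erase, Set.mem_insert_iff, Set.mem_diff,
    Set.mem_singleton_iff, Set.mem_union, Finset.mem_coe]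
  tauto

/-- Finset version of the Step rule. -/
def step' [DecidableEq (LTLf α)] (Γf : Finset (LTLf α)) : Finset (LTLf α) :=
  Γf.biUnion fun f => match f with
    | .next ψ => {ψ}
    | .wnext ψ => {ψ}
    | _ => ∅

lemma mem_step' [DecidableEq (LTLf α)] {Γf : Finset (LTLf α)} {x : LTLf α} :
    x ∈ step' Γf ↔ LTLf.next x ∈ Γf ∨ LTLf.wnext x ∈ Γf := by
  simp only [step', Finset.mem_biUnion]
  constructor
  · rintro ⟨f, hf, hx⟩
    cases f <;> simp_all
  · rintro (h | h)
    exacts [⟨.next x, h, by simp⟩, ⟨.wnext x, h, by simp⟩]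

lemma coe_step' [DecidableEq (LTLf α)] {Γf : Finset (LTLf α)} :
    (↑(step' Γf) : Set (LTLf α)) = stepLabel (↑Γf) := by
  ext x
  simp only [Finset.mem_coe, mem_step', stepLabel, Set.mem_setOf_eq]

lemma consistent_of_sat {σ : List (α → Prop)} {i : ℕ} {Γ : Set (LTLf α)}
    (h : ∀ ψ ∈ Γ, Sat σ ψ i) : Consistent Γ :=
  ⟨fun a => (σ.getD i (fun _ => False)) a, fun a ha => h _ ha, fun a ha => h _ ha⟩

/-- All the acceptance conditions of a branch except the head condition. -/
def Good (br : List (Set (LTLf α))) : Prop :=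
  (∀ j, j + 1 < br.length → TabRel (br.getD j ∅) (br.getD (j + 1) ∅)) ∧
  Poised (br.getD (br.length - 1) ∅) ∧
  (∀ ψ, LTLf.next ψ ∉ br.getD (br.length - 1) ∅) ∧
  (∀ j < br.length, Consistent (br.getD j ∅))

lemma good_cons {Γ : Set (LTLf α)} {br : List (Set (LTLf α))} (hne : br ≠ [])
    (hrel : TabRel Γ (br.getD 0 ∅)) (hc : Consistent Γ) (hg : Good br) :
    Good (Γ :: br) := by
  obtain ⟨b, t, rfl⟩ : ∃ b t, br = b :: t := by
    cases br with
    | nil => exact absurd rfl hne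
    | cons b t => exact ⟨b, t, rfl⟩
  obtain ⟨h1, h2, h3, h4⟩ := hg
  refine ⟨?_, ?_, ?_, ?_⟩
  · intro j hj
    cases j with
    | zero => simpa using hrel
    | succ j => exact h1 j (by simpa using hj)
  · simp only [List.length_cons, Nat.add_sub_cancel, List.getD_cons_succ] at h2 ⊢
    exact h2
  · simp only [List.length_cons, Nat.add_sub_cancel, List.getD_cons_succ] at h3 ⊢
    exact h3
  · intro j hj
    cases j with
    | zero => simpa using hc
    | succ j => simpa using h4 j (by simpa using hj)

lemma build (σ : List (α → Prop)) :
    ∀ fuel n (Γf : Finset (LTLf α)) (i : ℕ),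
      i < σ.length → σ.length - i ≤ fuel → (∑ ψ ∈ Γf, w ψ) ≤ n →
      (∀ ψ ∈ Γf, Sat σ ψ i) →
      ∃ br : List (Set (LTLf α)), br ≠ [] ∧ br.getD 0 ∅ = ↑Γf ∧ Good br := by
  classical
  intro fuel
  induction fuel with
  | zero => intro n Γf i hi hfuel _ _; exfalso; omega
  | succ fuel ihf =>
    intro n
    induction n using Nat.strong_induction_on with
    | _ n ihn =>
      intro Γf i hi hfuel hsum hsat
      by_cases hne : ∃ f ∈ Γf, ¬ Elementary f
      · -- expansion phase
        obtain ⟨f, hf, hnel⟩ := hne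
        have mkcons : ∀ (Γf' : Finset (LTLf α)),
            (∑ ψ ∈ Γf', w ψ) < ∑ ψ ∈ Γf, w ψ → Expands (↑Γf) ((↑Γf' : Set (LTLf α))) →
            (∀ ψ ∈ Γf', Sat σ ψ i) →
            ∃ br : List (Set (LTLf α)), br ≠ [] ∧ br.getD 0 ∅ = ↑Γf ∧ Good br := by
          intro Γf' hlt hexp hsat'
          obtain ⟨br, hbne, hb0, hg⟩ :=
            ihn (∑ ψ ∈ Γf', w ψ) (lt_of_lt_of_le hlt hsum) Γf' i hi hfuel le_rfl hsat'
          exact ⟨(↑Γf : Set (LTLf α)) :: br, by simp, by simp,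
            good_cons hbne (Or.inl (by rw [hb0]; exact hexp)) (consistent_of_sat hsat) hg⟩
        cases f with
        | atom a => exact absurd trivial hnel
        | natom a => exact absurd trivial hnel
        | next a => exact absurd trivial hnel
        | wnext a => exact absurd trivial hnel
        | or a b =>
          have hsf : Sat σ a i ∨ Sat σ b i := hsat _ hf
          rcases hsf with hs | hs
          · refine mkcons (insert a (Γf.erase (.or a b)))
              (sum_insert_erase_lt hf (by simp only [w]; omega)) ?_ ?_
            · rw [coe_insert_erase]; exact Expands.orl (Finset.mem_coe.mpr hf)
            · intro ψ hψ
              rcases Finset.mem_insert.mp hψ with rfl | hψ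
              · exact hs
              · exact hsat _ (Finset.mem_of_mem_erase hψ)
          · refine mkcons (insert b (Γf.erase (.or a b)))
              (sum_insert_erase_lt hf (by simp only [w]; omega)) ?_ ?_
            · rw [coe_insert_erase]; exact Expands.orr (Finset.mem_coe.mpr hf)
            · intro ψ hψ
              rcases Finset.mem_insert.mp hψ with rfl | hψ
              · exact hs
              · exact hsat _ (Finset.mem_of_mem_erase hψ)
        | and a b =>
          have hsf : Sat σ a i ∧ Sat σ b i := hsat _ hf
          refine mkcons (insert a (insert b (Γf.erase (.and a b))))
            (sum_insert2_erase_lt hf (by simp only [w]; omega)) ?_ ?_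
          · rw [coe_insert2_erase]; exact Expands.and_ (Finset.mem_coe.mpr hf)
          · intro ψ hψ
            rcases Finset.mem_insert.mp hψ with rfl | hψ
            · exact hsf.1
            rcases Finset.mem_insert.mp hψ with rfl | hψ
            · exact hsf.2
            · exact hsat _ (Finset.mem_of_mem_erase hψ)
        | until_ a b =>
          have hsf : ∃ j, i ≤ j ∧ j < σ.length ∧ Sat σ b j ∧
              ∀ k, i ≤ k → k < j → Sat σ a k := hsat _ hf
          obtain ⟨j, hij, hjl, hbj, hall⟩ := hsf
          rcases eq_or_lt_of_le hij with rfl | hij'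
          · refine mkcons (insert b (Γf.erase (.until_ a b)))
              (sum_insert_erase_lt hf (by simp only [w]; omega)) ?_ ?_
            · rw [coe_insert_erase]; exact Expands.untl (Finset.mem_coe.mpr hf)
            · intro ψ hψ
              rcases Finset.mem_insert.mp hψ with rfl | hψ
              · exact hbj
              · exact hsat _ (Finset.mem_of_mem_erase hψ)
          · refine mkcons (insert a (insert (.next (.until_ a b)) (Γf.erase (.until_ a b))))
              (sum_insert2_erase_lt hf (by simp only [w]; omega)) ?_ ?_
            · rw [coe_insert2_erase]; exact Expands.untr (Finset.mem_coe.mpr hf)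
            · intro ψ hψ
              rcases Finset.mem_insert.mp hψ with rfl | hψ
              · exact hall i le_rfl hij'
              rcases Finset.mem_insert.mp hψ with rfl | hψ
              · exact ⟨by omega, j, by omega, hjl, hbj, fun k hk1 hk2 => hall k (by omega) hk2⟩
              · exact hsat _ (Finset.mem_of_mem_erase hψ)
        | release a b =>
          have hsf : (∀ j, i ≤ j → j < σ.length → Sat σ b j) ∨
              ∃ k, i ≤ k ∧ k < σ.length ∧ Sat σ a k ∧
                ∀ j, i ≤ j → j ≤ k → Sat σ b j := hsat _ hf
          have relrCase : Sat σ b i → Sat σ (.wnext (.release a b)) i →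
              ∃ br : List (Set (LTLf α)), br ≠ [] ∧ br.getD 0 ∅ = ↑Γf ∧ Good br := by
            intro hbi hwn
            refine mkcons (insert b (insert (.wnext (.release a b)) (Γf.erase (.release a b))))
              (sum_insert2_erase_lt hf (by simp only [w]; omega)) ?_ ?_
            · rw [coe_insert2_erase]; exact Expands.relr (Finset.mem_coe.mpr hf)
            · intro ψ hψ
              rcases Finset.mem_insert.mp hψ with rfl | hψ
              · exact hbi
              rcases Finset.mem_insert.mp hψ with rfl | hψ
              · exact hwn
              · exact hsat _ (Finset.mem_of_mem_erase hψ)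
          rcases hsf with hall | ⟨k, hik, hkl, hak, hb⟩
          · refine relrCase (hall i le_rfl hi) ?_
            by_cases hend : i = σ.length - 1
            · exact Or.inl hend
            · exact Or.inr (Or.inl fun j hj hjl => hall j (by omega) hjl)
          · rcases eq_or_lt_of_le hik with rfl | hik'
            · refine mkcons (insert a (insert b (Γf.erase (.release a b))))
                (sum_insert2_erase_lt hf (by simp only [w]; omega)) ?_ ?_
              · rw [coe_insert2_erase]; exact Expands.rell (Finset.mem_coe.mpr hf)
              · intro ψ hψ
                rcases Finset.mem_insert.mp hψ with rfl | hψ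
                · exact hak
                rcases Finset.mem_insert.mp hψ with rfl | hψ
                · exact hb i le_rfl le_rfl
                · exact hsat _ (Finset.mem_of_mem_erase hψ)
            · refine relrCase (hb i le_rfl (le_of_lt hik')) ?_
              exact Or.inr (Or.inr ⟨k, by omega, hkl, hak,
                fun j h1 h2 => hb j (by omega) h2⟩)
      · -- poised phase
        push_neg at hne
        have hpoised : Poised (↑Γf : Set (LTLf α)) := fun ψ hψ => hne ψ (Finset.mem_coe.mp hψ)
        by_cases hnext : ∃ ψ, LTLf.next ψ ∈ Γf
        · -- Step rule
          obtain ⟨χ, hχ⟩ := hnext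
          have hχs : i < σ.length - 1 ∧ Sat σ χ (i + 1) := hsat _ hχ
          have hstep : i < σ.length - 1 := hχs.1
          have hsat' : ∀ ψ ∈ step' Γf, Sat σ ψ (i + 1) := by
            intro ψ hψ
            rcases mem_step'.mp hψ with h | h
            · exact (hsat _ h : Sat σ (.next ψ) i).2
            · rcases (hsat _ h : Sat σ (.wnext ψ) i) with h' | h'
              · omega
              · exact h'
          obtain ⟨br, hbne, hb0, hg⟩ := ihf (∑ ψ ∈ step' Γf, w ψ) (step' Γf) (i + 1)
            (by omega) (by omega) le_rfl hsat'
          refine ⟨(↑Γf : Set (LTLf α)) :: br, by simp, by simp, ?_⟩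
          exact good_cons hbne (Or.inr ⟨hpoised, by rw [hb0, coe_step']⟩)
            (consistent_of_sat hsat) hg
        · -- Empty rule
          push_neg at hnext
          refine ⟨[(↑Γf : Set (LTLf α))], by simp, by simp, ?_, ?_, ?_, ?_⟩
          · intro j hj; simp at hj
          · simpa using hpoised
          · intro ψ; simpa using hnext ψ
          · intro j hj
            simp only [List.length_singleton, Nat.lt_one_iff] at hj
            subst hj
            simpa using consistent_of_sat hsat

end Stmt12Aux

/-- soundness of the propositional LTLf tableau, stated contrapositively:
if `φ` is satisfiable by some nonempty finite trace, then the complete tableau for `φ`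
has an accepted branch (hence if all branches are rejected, `φ` is unsatisfiable). -/
theorem stmt12 {α : Type} (φ : LTLf α)
    (h : ∃ σ : List (α → Prop), σ ≠ [] ∧ Sat σ φ 0) :
    ∃ br : List (Set (LTLf α)), Accepted φ br := by
  classical
  obtain ⟨σ, hσ, hs⟩ := h
  have hlen : 0 < σ.length := List.length_pos_iff.mpr hσ
  have hsat0 : ∀ ψ ∈ ({φ} : Finset (LTLf α)), Sat σ ψ 0 := by
    intro ψ hψ
    rw [Finset.mem_singleton] at hψ
    subst hψ
    exact hs
  obtain ⟨br, hbne, hb0, hrel, hp, hn, hc⟩ :=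
    Stmt12Aux.build σ σ.length (Stmt12Aux.w φ) {φ} 0 hlen (by omega) (by simp) hsat0
  refine ⟨br, ⟨hbne, ?_, hrel⟩, hp, hn, fun i hi _ => hc i hi⟩
  rw [hb0]
  simp
end

section
/- Completeness of the propositional LTLf tableau: if a finite trace σ satisfies φ, then one can construct, by descending the complete tableau guided by σ with an index map J (J(0)=0, J incremented exactly at Step-rule nodes, constant at expansion nodes), a branch in which every node u at branch position i satisfies σ, J(i) ⊨ ψ for all ψ ∈ Γ(u), and this branch is accepted by the Empty rule after exactly |σ| poised nodes. -/
/-!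
Completeness is proved by letting the trace guide the descent through the tableau. A label
all of whose formulas hold at position `j` is either poised, and then the Step rule yields a
label holding at `j + 1` (or the branch ends if `j` is the last position), or it contains a
compound formula, and then the LTLf expansion laws `a U b ≡ b ∨ (a ∧ X(a U b))` and
`a R b ≡ (a ∧ b) ∨ (b ∧ wX(a R b))` select a child that still holds at `j`. The descent
terminates because expansion decreases the total size of the compound formulas not guarded by
a tomorrow operator, and the Step rule decreases the number of remaining trace positions.
-/

section

open Classical

variable {α : Type}

namespace LTLf

def weight : LTLf α → ℕ
  | .and a b | .or a b | .until_ a b | .release a b => a.weight + b.weight + 1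
  | _ => 0

end LTLf

noncomputable def labelWeight (Γ : Finset (LTLf α)) : ℕ := ∑ ψ ∈ Γ, ψ.weight

lemma labelWeight_union_le (s t : Finset (LTLf α)) :
    labelWeight (s ∪ t) ≤ labelWeight s + labelWeight t := by
  unfold labelWeight
  rw [← Finset.sum_union_inter]
  exact Nat.le_add_right _ _

lemma labelWeight_pair_le (a b : LTLf α) : labelWeight {a, b} ≤ a.weight + b.weight := by
  simpa [labelWeight] using labelWeight_union_le {a} {b}

lemma labelWeight_erase_union_lt {ψ : LTLf α} {Γ s : Finset (LTLf α)} (hψ : ψ ∈ Γ)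
    (hs : labelWeight s < ψ.weight) : labelWeight (Γ.erase ψ ∪ s) < labelWeight Γ :=
  calc labelWeight (Γ.erase ψ ∪ s) ≤ labelWeight (Γ.erase ψ) + labelWeight s :=
        labelWeight_union_le _ _
    _ < labelWeight (Γ.erase ψ) + ψ.weight := by omega
    _ = labelWeight Γ := Finset.sum_erase_add _ _ hψ

section Semantics

variable {σ : List (α → Prop)} {j : ℕ}

lemma sat_until_unfold {a b : LTLf α} (h : Sat σ (.until_ a b) j) :
    Sat σ b j ∨ Sat σ a j ∧ Sat σ (.next (.until_ a b)) j := by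
  obtain ⟨k, hjk, hk, hb, ha⟩ := h
  rcases hjk.eq_or_lt with rfl | hlt
  · exact Or.inl hb
  · exact Or.inr ⟨ha j le_rfl hlt, by omega, k, hlt, hk, hb, fun m hm => ha m (by omega)⟩

lemma sat_release_unfold {a b : LTLf α} (hj : j < σ.length) (h : Sat σ (.release a b) j) :
    Sat σ a j ∧ Sat σ b j ∨ Sat σ b j ∧ Sat σ (.wnext (.release a b)) j := by
  rcases h with hall | ⟨k, hjk, hk, ha, hb⟩
  · refine Or.inr ⟨hall j le_rfl hj, ?_⟩
    by_cases hend : j = σ.length - 1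
    · exact Or.inl hend
    · exact Or.inr (Or.inl fun m hm => hall m (by omega))
  · rcases hjk.eq_or_lt with rfl | hlt
    · exact Or.inl ⟨ha, hb j le_rfl le_rfl⟩
    · exact Or.inr ⟨hb j le_rfl hlt.le,
        Or.inr (Or.inr ⟨k, hlt, hk, ha, fun m hm => hb m (by omega)⟩)⟩

lemma exists_expansion_child {ψ : LTLf α} (hj : j < σ.length) (hψ : Sat σ ψ j)
    (hne : ¬ Elementary ψ) :
    ∃ s : Finset (LTLf α), (∀ Γ : Set (LTLf α), ψ ∈ Γ → Expands Γ (Γ \ {ψ} ∪ ↑s)) ∧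
      labelWeight s < ψ.weight ∧ ∀ χ ∈ s, Sat σ χ j := by
  cases ψ with
  | atom | natom | next | wnext => exact absurd trivial hne
  | and a b =>
    obtain ⟨ha, hb⟩ := hψ
    refine ⟨{a, b}, fun Γ h => ?_, ?_, by simp [ha, hb]⟩
    · rw [Finset.coe_pair]; exact .and_ h
    · have := labelWeight_pair_le a b; simp only [LTLf.weight]; omega
  | or a b =>
    rcases hψ with ha | hb
    · refine ⟨{a}, fun Γ h => ?_, ?_, by simp [ha]⟩
      · rw [Finset.coe_singleton]; exact .orl h
      · simp [labelWeight, LTLf.weight]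
    · refine ⟨{b}, fun Γ h => ?_, ?_, by simp [hb]⟩
      · rw [Finset.coe_singleton]; exact .orr h
      · simp [labelWeight, LTLf.weight]
  | until_ a b =>
    rcases sat_until_unfold hψ with hb | ⟨ha, hX⟩
    · refine ⟨{b}, fun Γ h => ?_, ?_, by simp [hb]⟩
      · rw [Finset.coe_singleton]; exact .untl h
      · simp [labelWeight, LTLf.weight]
    · refine ⟨{a, .next (.until_ a b)}, fun Γ h => ?_, ?_, by simp [ha, hX]⟩
      · rw [Finset.coe_pair]; exact .untr h
      · have := labelWeight_pair_le a (.next (.until_ a b)); simp only [LTLf.weight] at *; omega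
  | release a b =>
    rcases sat_release_unfold hj hψ with ⟨ha, hb⟩ | ⟨hb, hwX⟩
    · refine ⟨{a, b}, fun Γ h => ?_, ?_, by simp [ha, hb]⟩
      · rw [Finset.coe_pair]; exact .rell h
      · have := labelWeight_pair_le a b; simp only [LTLf.weight]; omega
    · refine ⟨{b, .wnext (.release a b)}, fun Γ h => ?_, ?_, by simp [hb, hwX]⟩
      · rw [Finset.coe_pair]; exact .relr h
      · have := labelWeight_pair_le b (.wnext (.release a b)); simp only [LTLf.weight] at *; omega

lemma exists_expands_sat {Γ : Finset (LTLf α)} (hj : j < σ.length) (hΓ : ∀ ψ ∈ Γ, Sat σ ψ j)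
    (hp : ¬ Poised (Γ : Set (LTLf α))) :
    ∃ Δ : Finset (LTLf α), Expands (Γ : Set (LTLf α)) Δ ∧ labelWeight Δ < labelWeight Γ ∧
      ∀ χ ∈ Δ, Sat σ χ j := by
  obtain ⟨ψ, hψ, hne⟩ : ∃ ψ ∈ Γ, ¬ Elementary ψ := by simpa [Poised] using hp
  obtain ⟨s, hexp, hs, hsat⟩ := exists_expansion_child hj (hΓ ψ hψ) hne
  refine ⟨Γ.erase ψ ∪ s, ?_, labelWeight_erase_union_lt hψ hs, ?_⟩
  · rw [Finset.coe_union, Finset.coe_erase]; exact hexp _ hψ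
  · simp only [Finset.mem_union, Finset.mem_erase]
    rintro χ (⟨-, hχ⟩ | hχ)
    exacts [hΓ χ hχ, hsat χ hχ]

lemma sat_stepLabel {Γ : Set (LTLf α)} (hj : j + 1 < σ.length) (hΓ : ∀ ψ ∈ Γ, Sat σ ψ j) :
    ∀ ψ ∈ stepLabel Γ, Sat σ ψ (j + 1) := by
  rintro ψ (hX | hwX)
  · exact (hΓ _ hX).2
  · exact (hΓ _ hwX).resolve_left (by omega)

lemma consistent_of_sat {Γ : Set (LTLf α)} (hΓ : ∀ ψ ∈ Γ, Sat σ ψ j) : Consistent Γ :=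
  ⟨σ.getD j fun _ => False, fun _ ha => hΓ _ ha, fun _ ha => hΓ _ ha⟩

end Semantics

noncomputable def stepFinset (Γ : Finset (LTLf α)) : Finset (LTLf α) :=
  Γ.preimage LTLf.next (Function.Injective.injOn fun _ _ => LTLf.next.inj) ∪
    Γ.preimage LTLf.wnext (Function.Injective.injOn fun _ _ => LTLf.wnext.inj)

lemma coe_stepFinset (Γ : Finset (LTLf α)) : (stepFinset Γ : Set (LTLf α)) = stepLabel ↑Γ := by
  ext ψ; simp [stepFinset, stepLabel]

/-- A tableau branch descending along `σ`, whose first label sits at trace position `j`. -/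
inductive GuidedBranch (σ : List (α → Prop)) : ℕ → List (Set (LTLf α)) → Prop
  | last {j : ℕ} {Γ : Set (LTLf α)} : Poised Γ → (∀ ψ ∈ Γ, Sat σ ψ j) → j + 1 = σ.length →
      GuidedBranch σ j [Γ]
  | expand {j : ℕ} {Γ Δ : Set (LTLf α)} {br : List (Set (LTLf α))} : ¬ Poised Γ →
      Expands Γ Δ → (∀ ψ ∈ Γ, Sat σ ψ j) → GuidedBranch σ j (Δ :: br) →
      GuidedBranch σ j (Γ :: Δ :: br)
  | step {j : ℕ} {Γ : Set (LTLf α)} {br : List (Set (LTLf α))} : Poised Γ →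
      (∀ ψ ∈ Γ, Sat σ ψ j) → GuidedBranch σ (j + 1) (stepLabel Γ :: br) →
      GuidedBranch σ j (Γ :: stepLabel Γ :: br)

theorem exists_guidedBranch (σ : List (α → Prop)) (j : ℕ) (Γ : Finset (LTLf α))
    (hj : j < σ.length) (hΓ : ∀ ψ ∈ Γ, Sat σ ψ j) : ∃ br, GuidedBranch σ j (↑Γ :: br) := by
  by_cases hp : Poised (Γ : Set (LTLf α))
  · by_cases hend : j + 1 = σ.length
    · exact ⟨[], .last hp hΓ hend⟩
    · have hnext : j + 1 < σ.length := by omega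
      obtain ⟨br, hbr⟩ := exists_guidedBranch σ (j + 1) (stepFinset Γ) hnext fun ψ hψ =>
        sat_stepLabel hnext hΓ ψ (by rwa [← coe_stepFinset])
      rw [coe_stepFinset] at hbr
      exact ⟨_, .step hp hΓ hbr⟩
  · obtain ⟨Δ, hexp, hlt, hΔ⟩ := exists_expands_sat hj hΓ hp
    obtain ⟨br, hbr⟩ := exists_guidedBranch σ j Δ hj hΔ
    exact ⟨_, .expand hp hexp hΓ hbr⟩
termination_by (σ.length - j, labelWeight Γ)
decreasing_by
  · exact Prod.Lex.left _ _ (by omega)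
  · exact Prod.Lex.right _ hlt

/-- The index map `J`: the number of poised labels, i.e. of Step rules, before label `i`. -/
noncomputable def poisedCount (br : List (Set (LTLf α))) : ℕ → ℕ :=
  Nat.count fun k => Poised (br.getD k ∅)

@[simp]
lemma poisedCount_zero (br : List (Set (LTLf α))) : poisedCount br 0 = 0 :=
  Nat.count_zero _

lemma poisedCount_succ (br : List (Set (LTLf α))) (i : ℕ) :
    poisedCount br (i + 1) = poisedCount br i + if Poised (br.getD i ∅) then 1 else 0 :=
  Nat.count_succ _ _

lemma poisedCount_cons_succ (Γ : Set (LTLf α)) (br : List (Set (LTLf α))) (i : ℕ) :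
    poisedCount (Γ :: br) (i + 1) = poisedCount br i + if Poised Γ then 1 else 0 :=
  Nat.count_succ' _ _

lemma ncard_poised_eq_poisedCount (br : List (Set (LTLf α))) :
    {i | i < br.length ∧ Poised (br.getD i ∅)}.ncard = poisedCount br br.length := by
  rw [poisedCount, Nat.count_eq_card_filter_range, ← Set.ncard_coe_finset]
  congr 1
  ext i
  simp

namespace GuidedBranch

variable {σ : List (α → Prop)} {j : ℕ} {br : List (Set (LTLf α))}

lemma tabRel (h : GuidedBranch σ j br) :
    ∀ i, i + 1 < br.length → TabRel (br.getD i ∅) (br.getD (i + 1) ∅) := by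
  induction h with
  | last => simp
  | expand _ hexp _ _ ih =>
    rintro (_ | i) hi
    · exact .inl hexp
    · exact ih i (by simpa using hi)
  | step hp _ _ ih =>
    rintro (_ | i) hi
    · exact .inr ⟨hp, rfl⟩
    · exact ih i (by simpa using hi)

lemma poised_last (h : GuidedBranch σ j br) : Poised (br.getD (br.length - 1) ∅) := by
  induction h with
  | last hp => exact hp
  | expand _ _ _ _ ih | step _ _ _ ih => simpa using ih

lemma next_notMem_last (h : GuidedBranch σ j br) :
    ∀ ψ, LTLf.next ψ ∉ br.getD (br.length - 1) ∅ := by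
  induction h with
  | last _ hsat hend => exact fun ψ hψ => absurd (hsat _ hψ).1 (by omega)
  | expand _ _ _ _ ih | step _ _ _ ih => simpa using ih

lemma sat (h : GuidedBranch σ j br) :
    ∀ i < br.length, ∀ ψ ∈ br.getD i ∅, Sat σ ψ (j + poisedCount br i) := by
  induction h with
  | last _ hsat => simpa using hsat
  | expand hp _ hsat _ ih =>
    rintro (_ | i) hi ψ hψ
    · simpa using hsat ψ hψ
    · simpa [poisedCount_cons_succ, hp] using ih i (by simpa using hi) ψ hψ
  | step hp hsat _ ih =>
    rintro (_ | i) hi ψ hψ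
    · simpa using hsat ψ hψ
    · rw [poisedCount_cons_succ, if_pos hp, ← add_assoc, add_right_comm]
      exact ih i (by simpa using hi) ψ hψ

lemma add_poisedCount_length (h : GuidedBranch σ j br) :
    j + poisedCount br br.length = σ.length := by
  induction h with
  | last hp _ hend => simpa [poisedCount_cons_succ, hp] using hend
  | expand hp _ _ _ ih => simpa [poisedCount_cons_succ, hp] using ih
  | step hp _ _ ih =>
    rw [List.length_cons, poisedCount_cons_succ, if_pos hp]
    omega

end GuidedBranch

end

/-- completeness of the propositional LTLf tableau.  If a nonempty finite
trace `σ` satisfies `φ`, then there is a branch of the complete tableau and an index map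
`J` with `J 0 = 0`, `J` incremented exactly at Step-rule (poised) nodes and constant at
expansion nodes, such that every formula in the `i`-th label is satisfied by `σ` at
position `J i`, and the branch is accepted with exactly `|σ|` poised nodes. -/
theorem stmt13 {α : Type} (φ : LTLf α) (σ : List (α → Prop)) (hσ : σ ≠ [])
    (h : Sat σ φ 0) :
    ∃ (br : List (Set (LTLf α))) (J : ℕ → ℕ),
      Accepted φ br ∧
      J 0 = 0 ∧
      (∀ i, i + 1 < br.length →
        (Poised (br.getD i ∅) → J (i + 1) = J i + 1) ∧
        (¬ Poised (br.getD i ∅) → J (i + 1) = J i)) ∧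
      (∀ i < br.length, ∀ ψ ∈ br.getD i ∅, Sat σ ψ (J i)) ∧
      {i | i < br.length ∧ Poised (br.getD i ∅)}.ncard = σ.length := by
  obtain ⟨tail, hbr⟩ := exists_guidedBranch σ 0 {φ} (List.length_pos_iff.2 hσ) (by simpa using h)
  rw [Finset.coe_singleton] at hbr
  have hsat := hbr.sat
  simp only [zero_add] at hsat
  refine ⟨_, poisedCount ({φ} :: tail), ⟨⟨List.cons_ne_nil _ _, rfl, hbr.tabRel⟩,
    hbr.poised_last, hbr.next_notMem_last, fun i hi _ => consistent_of_sat (hsat i hi)⟩,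
    poisedCount_zero _, fun i _ => ⟨fun hp => ?_, fun hp => ?_⟩, hsat, ?_⟩
  · rw [poisedCount_succ, if_pos hp]
  · rw [poisedCount_succ, if_neg hp, add_zero]
  · rw [ncard_poised_eq_poisedCount, ← hbr.add_poisedCount_length, zero_add]
end

section
/- If a formula φ is satisfied by some finite trace of length k+1, then the encoding formula ⟦φ⟧_k ∧ ⋀_{Xα ∈ closure(φ)} ¬(Xα)^k_G ∧ ¬ℓ^k is satisfiable (in the propositional case): the assignment obtained from the trace via the stepped variables, setting (Xα)^i_G and (wXα)^i_G true iff σ,i ⊨ Xα (resp. wXα), ℓ^i true iff i < k, satisfies it. -/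
/-- The set of subformulas of a formula. -/
def SubF {α : Type} : LTLf α → Set (LTLf α)
  | .atom a => {.atom a}
  | .natom a => {.natom a}
  | .and φ ψ => insert (.and φ ψ) (SubF φ ∪ SubF ψ)
  | .or φ ψ => insert (.or φ ψ) (SubF φ ∪ SubF ψ)
  | .next φ => insert (.next φ) (SubF φ)
  | .wnext φ => insert (.wnext φ) (SubF φ)
  | .until_ φ ψ => insert (.until_ φ ψ) (SubF φ ∪ SubF ψ)
  | .release φ ψ => insert (.release φ ψ) (SubF φ ∪ SubF ψ)

/-- The closure of `φ`: subformulas plus `X(ψ₁ U ψ₂)` and `wX(ψ₁ R ψ₂)` for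
until/release subformulas. -/
def Closure {α : Type} (φ : LTLf α) : Set (LTLf α) :=
  SubF φ ∪ {ψ | ∃ a b, ψ = LTLf.next (.until_ a b) ∧ LTLf.until_ a b ∈ SubF φ}
         ∪ {ψ | ∃ a b, ψ = LTLf.wnext (.release a b) ∧ LTLf.release a b ∈ SubF φ}

/-- An assignment to the variables of the encoding: stepped atoms `p^i`, the
last-instant markers `ℓ^i`, and the grounded temporal variables `(Xα)^i_G`, `(wXα)^i_G`. -/
structure Valn (α : Type) where
  atomV : ℕ → α → Prop
  ell : ℕ → Prop
  gX : ℕ → LTLf α → Prop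
  gwX : ℕ → LTLf α → Prop

/-- The (grounded, stepped) interpretation of the stepped normal form `snf_i(ψ)^i_G`
under an assignment `v`. -/
def snfG {α : Type} (v : Valn α) (i : ℕ) : LTLf α → Prop
  | .atom a => v.atomV i a
  | .natom a => ¬ v.atomV i a
  | .and φ ψ => snfG v i φ ∧ snfG v i ψ
  | .or φ ψ => snfG v i φ ∨ snfG v i ψ
  | .next φ => v.gX i φ
  | .wnext φ => v.gwX i φ
  | .until_ φ ψ => snfG v i ψ ∨ (snfG v i φ ∧ v.gX i (.until_ φ ψ))
  | .release φ ψ => snfG v i ψ ∧ (snfG v i φ ∨ v.gwX i (.release φ ψ))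

/-- The `k`-unravelling `⟦φ⟧_k` of the tableau for `φ`, as a predicate on assignments. -/
def Unrav {α : Type} (v : Valn α) (φ : LTLf α) : ℕ → Prop
  | 0 => snfG v 0 φ
  | k + 1 => Unrav v φ k ∧ v.ell k ∧
      (∀ a, LTLf.next a ∈ Closure φ → (v.gX k a ↔ snfG v (k + 1) a)) ∧
      (∀ a, LTLf.wnext a ∈ Closure φ → (v.gwX k a ↔ snfG v (k + 1) a))

theorem sat_until_iff {α} (σ : List (α → Prop)) (φ ψ : LTLf α) (i : ℕ) (hi : i < σ.length) :
    Sat σ (.until_ φ ψ) i ↔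
      Sat σ ψ i ∨ (Sat σ φ i ∧ i < σ.length - 1 ∧ Sat σ (.until_ φ ψ) (i + 1)) := by
  simp only [Sat]
  constructor
  · rintro ⟨j, hij, hjl, hψ, hφ⟩
    rcases eq_or_lt_of_le hij with rfl | hlt
    · exact Or.inl hψ
    · exact Or.inr ⟨hφ i le_rfl hlt, by omega,
        j, by omega, hjl, hψ, fun m h1 h2 => hφ m (by omega) h2⟩
  · rintro (hψ | ⟨hφi, _, j, hij, hjl, hψ, hφ⟩)
    · exact ⟨i, le_rfl, hi, hψ, fun m h1 h2 => absurd h1 (by omega)⟩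
    · refine ⟨j, by omega, hjl, hψ, fun m h1 h2 => ?_⟩
      rcases eq_or_lt_of_le h1 with rfl | h
      · exact hφi
      · exact hφ m (by omega) h2

theorem sat_release_iff {α} (σ : List (α → Prop)) (φ ψ : LTLf α) (i : ℕ) (hi : i < σ.length) :
    Sat σ (.release φ ψ) i ↔
      Sat σ ψ i ∧ (Sat σ φ i ∨ (i = σ.length - 1 ∨ Sat σ (.release φ ψ) (i + 1))) := by
  simp only [Sat]
  constructor
  · rintro (hall | ⟨m, him, hml, hφ, hψ⟩)
    · refine ⟨hall i le_rfl hi, ?_⟩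
      by_cases hlast : i = σ.length - 1
      · exact Or.inr (Or.inl hlast)
      · exact Or.inr (Or.inr (Or.inl fun j h1 h2 => hall j (by omega) h2))
    · refine ⟨hψ i le_rfl him, ?_⟩
      rcases eq_or_lt_of_le him with rfl | hlt
      · exact Or.inl hφ
      · exact Or.inr (Or.inr (Or.inr ⟨m, by omega, hml, hφ,
          fun j h1 h2 => hψ j (by omega) h2⟩))
  · rintro ⟨hψi, hφi | hlast | hall | ⟨m, him, hml, hφ, hψ⟩⟩
    · exact Or.inr ⟨i, le_rfl, hi, hφi, fun j h1 h2 => by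
        have : j = i := by omega
        subst this; exact hψi⟩
    · refine Or.inl fun j h1 h2 => ?_
      have : j = i := by omega
      subst this; exact hψi
    · refine Or.inl fun j h1 h2 => ?_
      rcases eq_or_lt_of_le h1 with rfl | h
      · exact hψi
      · exact hall j (by omega) h2
    · refine Or.inr ⟨m, by omega, hml, hφ, fun j h1 h2 => ?_⟩
      rcases eq_or_lt_of_le h1 with rfl | h
      · exact hψi
      · exact hψ j (by omega) h2

theorem snfG_iff {α} (σ : List (α → Prop)) (k : ℕ) (ψ : LTLf α) (i : ℕ) (hi : i < σ.length) :
    snfG ⟨fun i a => (σ.getD i (fun _ => False)) a, fun i => i < k,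
      fun i a => Sat σ (.next a) i, fun i a => Sat σ (.wnext a) i⟩ i ψ ↔ Sat σ ψ i := by
  induction ψ generalizing i with
  | atom a => exact Iff.rfl
  | natom a => exact Iff.rfl
  | and φ ψ ih1 ih2 => exact and_congr (ih1 i hi) (ih2 i hi)
  | or φ ψ ih1 ih2 => exact or_congr (ih1 i hi) (ih2 i hi)
  | next φ ih => exact Iff.rfl
  | wnext φ ih => exact Iff.rfl
  | until_ φ ψ ih1 ih2 =>
    rw [sat_until_iff σ φ ψ i hi]
    exact or_congr (ih2 i hi) (and_congr (ih1 i hi) Iff.rfl)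
  | release φ ψ ih1 ih2 =>
    rw [sat_release_iff σ φ ψ i hi]
    exact and_congr (ih2 i hi) (or_congr (ih1 i hi) Iff.rfl)

/-- if `φ` is satisfied by a finite trace of length `k+1`, then the final
encoding `⟦φ⟧_k ∧ ⋀_{Xα ∈ closure(φ)} ¬(Xα)^k_G ∧ ¬ℓ^k` is satisfiable; concretely, the
assignment obtained from the trace — stepped atoms read off the trace, `(Xα)^i_G` and
`(wXα)^i_G` true iff `σ,i ⊨ Xα` (resp. `wXα`), and `ℓ^i` true iff `i < k` — satisfies it. -/
theorem stmt16 {α : Type} (φ : LTLf α) (k : ℕ) (σ : List (α → Prop))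
    (hlen : σ.length = k + 1) (h : Sat σ φ 0) :
    let v : Valn α :=
      { atomV := fun i a => (σ.getD i (fun _ => False)) a
        ell := fun i => i < k
        gX := fun i a => Sat σ (.next a) i
        gwX := fun i a => Sat σ (.wnext a) i }
    Unrav v φ k ∧ (∀ a, LTLf.next a ∈ Closure φ → ¬ v.gX k a) ∧ ¬ v.ell k := by
  intro v
  have hs : ∀ ψ i, i < σ.length → (snfG v i ψ ↔ Sat σ ψ i) :=
    fun ψ i hi => snfG_iff σ k ψ i hi
  have hun : ∀ m, m ≤ k → Unrav v φ m := by
    intro m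
    induction m with
    | zero => exact fun _ => (hs φ 0 (by omega)).mpr h
    | succ n ih =>
      intro hm
      refine ⟨ih (by omega), by show n < k; omega, fun a _ => ?_, fun a _ => ?_⟩
      · show Sat σ (.next a) n ↔ _
        rw [hs a (n + 1) (by omega)]
        simp only [Sat]
        constructor
        · exact fun h => h.2
        · exact fun h => ⟨by omega, h⟩
      · show Sat σ (.wnext a) n ↔ _
        rw [hs a (n + 1) (by omega)]
        simp only [Sat]
        constructor
        · rintro (h | h)
          · omega
          · exact h
        · exact fun h => Or.inr h
  refine ⟨hun k le_rfl, fun a _ hx => ?_, by show ¬ k < k; omega⟩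
  have : k < σ.length - 1 := hx.1
  omega
end
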